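/- Let n ≥ 2, let A be an invertible n×n real matrix with factorization A = [[L̂, 0],[ℓᵀ, 1]]·[[Û, u],[0, p]] where L̂ is (n−1)×(n−1) lower unitriangular, Û is (n−1)×(n−1) invertible upper triangular, and ℓ, u ∈ ℝ^{n−1}. Fix an index i < n and ε ∈ ℝ, and suppose A + ε·e_i e_nᵀ admits an LU factorization whose last pivot is p_ε^{(i,n)}. Then p_ε^{(i,n)} = p − ε·(ℓᵀL̂⁻¹)_i. -/

import Mathlib

open Matrix

/-- `M` is lower triangular with all diagonal entries equal to `1`. -/
def IsLowerUnitri {k : ℕ} (M : Matrix (Fin k) (Fin k) ℝ) : Prop :=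
  (∀ i, M i i = 1) ∧ ∀ i j : Fin k, i < j → M i j = 0

/-- `M` is upper triangular. -/
def IsUpperTri {k : ℕ} (M : Matrix (Fin k) (Fin k) ℝ) : Prop :=
  ∀ i j : Fin k, j < i → M i j = 0

/-- The block matrix `[[L̂, 0],[ℓᵀ, 1]] * [[Û, u],[0, p]]`, viewed as an
`(m+1) × (m+1)` matrix. -/
noncomputable def blockLU {m : ℕ} (Lhat Uhat : Matrix (Fin m) (Fin m) ℝ)
    (l u : Fin m → ℝ) (p : ℝ) : Matrix (Fin (m + 1)) (Fin (m + 1)) ℝ :=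
  Matrix.reindex finSumFinEquiv finSumFinEquiv
    (Matrix.fromBlocks Lhat 0 (Matrix.of fun (_ : Fin 1) i => l i)
        (Matrix.of fun (_ : Fin 1) (_ : Fin 1) => (1 : ℝ)) *
      Matrix.fromBlocks Uhat (Matrix.of fun i (_ : Fin 1) => u i) 0
        (Matrix.of fun (_ : Fin 1) (_ : Fin 1) => p))


lemma symm_castSucc {m : ℕ} (a : Fin m) : finSumFinEquiv.symm a.castSucc = Sum.inl a := by
  simp [Fin.castSucc]

lemma symm_last {m : ℕ} : finSumFinEquiv.symm (Fin.last m) = Sum.inr (0 : Fin 1) := by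
  rw [show (Fin.last m) = Fin.natAdd m (0 : Fin 1) by ext; simp]; simp

lemma det_lowerUnitri {k : ℕ} {M : Matrix (Fin k) (Fin k) ℝ} (h : IsLowerUnitri M) :
    M.det = 1 := by
  rw [Matrix.det_of_lowerTriangular M (fun i j hij => h.2 i j hij)]
  simp [h.1]

lemma det_upperTri {k : ℕ} {M : Matrix (Fin k) (Fin k) ℝ} (h : IsUpperTri M) :
    M.det = ∏ j, M j j :=
  Matrix.det_of_upperTriangular (fun i j hij => h i j hij)

lemma blockLU_cc {m : ℕ} (Lhat Uhat : Matrix (Fin m) (Fin m) ℝ) (l u : Fin m → ℝ) (p : ℝ)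
    (a b : Fin m) : blockLU Lhat Uhat l u p a.castSucc b.castSucc = (Lhat * Uhat) a b := by
  simp [blockLU, Matrix.fromBlocks_multiply, symm_castSucc]

lemma blockLU_cl {m : ℕ} (Lhat Uhat : Matrix (Fin m) (Fin m) ℝ) (l u : Fin m → ℝ) (p : ℝ)
    (a : Fin m) : blockLU Lhat Uhat l u p a.castSucc (Fin.last m) = (Lhat *ᵥ u) a := by
  simp [blockLU, Matrix.fromBlocks_multiply, symm_castSucc, symm_last, Matrix.mul_apply,
    Matrix.mulVec, dotProduct]

lemma blockLU_lc {m : ℕ} (Lhat Uhat : Matrix (Fin m) (Fin m) ℝ) (l u : Fin m → ℝ) (p : ℝ)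
    (b : Fin m) : blockLU Lhat Uhat l u p (Fin.last m) b.castSucc = (vecMul l Uhat) b := by
  simp [blockLU, Matrix.fromBlocks_multiply, symm_castSucc, symm_last, Matrix.mul_apply,
    Matrix.vecMul, dotProduct]

lemma blockLU_ll {m : ℕ} (Lhat Uhat : Matrix (Fin m) (Fin m) ℝ) (l u : Fin m → ℝ) (p : ℝ) :
    blockLU Lhat Uhat l u p (Fin.last m) (Fin.last m) = l ⬝ᵥ u + p := by
  simp [blockLU, Matrix.fromBlocks_multiply, symm_last, Matrix.mul_apply, dotProduct]

lemma blockLU_det {m : ℕ} (Lhat Uhat : Matrix (Fin m) (Fin m) ℝ) (l u : Fin m → ℝ) (p : ℝ)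
    (hL : IsLowerUnitri Lhat) :
    (blockLU Lhat Uhat l u p).det = Uhat.det * p := by
  simp [blockLU, Matrix.det_mul, Matrix.det_fromBlocks_zero₁₂, Matrix.det_fromBlocks_zero₂₁,
    det_lowerUnitri hL]

lemma blockLU_perturb {m : ℕ} (Lhat Uhat : Matrix (Fin m) (Fin m) ℝ) (l u : Fin m → ℝ) (p : ℝ)
    (hLinv : Lhat * Lhat⁻¹ = 1) (i : Fin m) (ε : ℝ) :
    blockLU Lhat Uhat l (fun j => u j + ε * Lhat⁻¹ j i) (p - ε * (vecMul l Lhat⁻¹) i)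
      = blockLU Lhat Uhat l u p + Matrix.single i.castSucc (Fin.last m) ε := by
  ext x y
  induction x using Fin.lastCases with
  | cast a =>
    induction y using Fin.lastCases with
    | cast b =>
      simp only [Matrix.add_apply, blockLU_cc, Matrix.single, Matrix.of_apply]
      rw [if_neg (by rintro ⟨-, h⟩; exact (Fin.castSucc_lt_last b).ne' h), add_zero]
    | last =>
      have h1 : (Lhat * Lhat⁻¹) a i = (1 : Matrix (Fin m) (Fin m) ℝ) a i := by rw [hLinv]
      simp only [Matrix.add_apply, blockLU_cl, Matrix.single, Matrix.mulVec, dotProduct,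
        Matrix.of_apply]
      rw [Finset.sum_congr rfl (fun j _ => mul_add (Lhat a j) (u j) (ε * Lhat⁻¹ j i)),
        Finset.sum_add_distrib]
      simp only [Matrix.mul_apply, Matrix.one_apply] at h1
      have : ∑ j, Lhat a j * (ε * Lhat⁻¹ j i) = ε * ∑ j, Lhat a j * Lhat⁻¹ j i := by
        rw [Finset.mul_sum]; congr 1; ext j; ring
      rw [this, h1]
      by_cases hai : a = i
      · simp [hai]
      · rw [if_neg hai, if_neg (by rintro ⟨h, -⟩; exact hai (Fin.castSucc_inj.mp h.symm))]
        ring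
  | last =>
    induction y using Fin.lastCases with
    | cast b =>
      simp only [Matrix.add_apply, blockLU_lc, Matrix.single, Matrix.of_apply]
      rw [if_neg (by rintro ⟨h, -⟩; exact (Fin.castSucc_lt_last i).ne h), add_zero]
    | last =>
      simp only [Matrix.add_apply, blockLU_ll, Matrix.single, Matrix.of_apply]
      have : l ⬝ᵥ (fun j => u j + ε * Lhat⁻¹ j i) = l ⬝ᵥ u + ε * (vecMul l Lhat⁻¹) i := by
        simp only [dotProduct, Matrix.vecMul, Matrix.mul_apply]
        rw [Finset.mul_sum, ← Finset.sum_add_distrib]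
        congr 1; ext j; ring
      rw [this]
      have : (Fin.last m) ≠ i.castSucc := (Fin.castSucc_lt_last i).ne'
      rw [if_neg (by rintro ⟨h, -⟩; exact (Fin.castSucc_lt_last i).ne h)]
      ring

lemma submatrix_mul_tri {m : ℕ} (L' U' : Matrix (Fin (m+1)) (Fin (m+1)) ℝ)
    (hL' : IsLowerUnitri L') :
    (L' * U').submatrix Fin.castSucc Fin.castSucc =
      (L'.submatrix Fin.castSucc Fin.castSucc) * (U'.submatrix Fin.castSucc Fin.castSucc) := by
  ext a b
  simp only [Matrix.submatrix_apply, Matrix.mul_apply]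
  rw [Fin.sum_univ_castSucc]
  rw [hL'.2 a.castSucc (Fin.last m) (Fin.castSucc_lt_last a)]
  simp

theorem stmt_1 {m : ℕ} (hm : 1 ≤ m)
    (Lhat Uhat : Matrix (Fin m) (Fin m) ℝ)
    (hLhat : IsLowerUnitri Lhat) (hUhat : IsUpperTri Uhat) (hUdet : IsUnit Uhat.det)
    (l u : Fin m → ℝ) (p : ℝ)
    (A : Matrix (Fin (m + 1)) (Fin (m + 1)) ℝ)
    (hA : A = blockLU Lhat Uhat l u p)
    (hAdet : IsUnit A.det)
    (i : Fin m) (ε : ℝ)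
    (L' U' : Matrix (Fin (m + 1)) (Fin (m + 1)) ℝ)
    (hL' : IsLowerUnitri L') (hU' : IsUpperTri U')
    (hfact : A + Matrix.single i.castSucc (Fin.last m) ε = L' * U') :
    U' (Fin.last m) (Fin.last m) = p - ε * (Matrix.vecMul l Lhat⁻¹) i := by
  have hLinv : Lhat * Lhat⁻¹ = 1 :=
    Matrix.mul_nonsing_inv _ (by rw [det_lowerUnitri hLhat]; exact isUnit_one)
  set p' : ℝ := p - ε * (Matrix.vecMul l Lhat⁻¹) i with hp'
  -- the perturbed matrix has an explicit block LU factorization with last pivot p'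
  have hM : L' * U' = blockLU Lhat Uhat l (fun j => u j + ε * Lhat⁻¹ j i) p' := by
    rw [← hfact, hA, blockLU_perturb Lhat Uhat l u p hLinv i ε]
  -- determinant of the perturbed matrix
  have hdetM : (L' * U').det = Uhat.det * p' := by
    rw [hM, blockLU_det _ _ _ _ _ hLhat]
  -- leading principal submatrix
  have hsub : (L' * U').submatrix Fin.castSucc Fin.castSucc = Lhat * Uhat := by
    ext a b
    rw [Matrix.submatrix_apply, hM, blockLU_cc]
  have hsub2 := submatrix_mul_tri L' U' hL'
  have hL0 : IsLowerUnitri (L'.submatrix Fin.castSucc Fin.castSucc) :=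
    ⟨fun a => hL'.1 _, fun a b hab => hL'.2 _ _ (by simpa using hab)⟩
  have hU0 : IsUpperTri (U'.submatrix Fin.castSucc Fin.castSucc) :=
    fun a b hab => hU' _ _ (by simpa using hab)
  -- det Uhat = product of first m pivots of U'
  have hprod : Uhat.det = ∏ j : Fin m, U' j.castSucc j.castSucc := by
    have : (Lhat * Uhat).det = Uhat.det := by
      rw [Matrix.det_mul, det_lowerUnitri hLhat, one_mul]
    rw [← this, ← hsub, hsub2, Matrix.det_mul, det_lowerUnitri hL0, one_mul,
      det_upperTri hU0]
    rfl
  have hdetU' : (L' * U').det = Uhat.det * U' (Fin.last m) (Fin.last m) := by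
    rw [Matrix.det_mul, det_lowerUnitri hL', one_mul, det_upperTri hU',
      Fin.prod_univ_castSucc, hprod]
  have := hdetM.symm.trans hdetU'
  exact (mul_left_cancel₀ hUdet.ne_zero this).symm
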